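/- If I − A is invertible and 1 + K(I − A)⁻¹B > 0, then the dynamics x⁺ = A x + B ū have no equilibrium in the closed half-space {x | −K x ≥ ū} (with ū > 0). -/
import Mathlib

open Matrix

/-- If I - A is invertible and 1 + K(I-A)⁻¹B > 0, then x⁺ = A x + B ū has no
equilibrium in the closed half-space {x | -K x ≥ ū} (with ū > 0). -/
theorem no_equilibrium_in_saturated_region {n : ℕ}
    (A : Matrix (Fin n) (Fin n) ℝ) [Invertible (1 - A)]
    (B K : Fin n → ℝ) (ubar : ℝ) (hubar : 0 < ubar)
    (hK : 1 + K ⬝ᵥ (1 - A)⁻¹.mulVec B > 0) :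
    ¬ ∃ x : Fin n → ℝ, A.mulVec x + ubar • B = x ∧ -(K ⬝ᵥ x) ≥ ubar := by
  rintro ⟨x, hx, hsat⟩
  have h1 : (1 - A).mulVec x = ubar • B := by
    rw [sub_mulVec, one_mulVec, sub_eq_iff_eq_add]
    nth_rewrite 1 [← hx]; exact add_comm _ _
  have h2 : x = (1 - A)⁻¹.mulVec (ubar • B) := by
    rw [← h1, Matrix.mulVec_mulVec, Matrix.inv_mul_of_invertible, one_mulVec]
  have h3 : K ⬝ᵥ x = ubar * (K ⬝ᵥ (1 - A)⁻¹.mulVec B) := by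
    rw [h2, Matrix.mulVec_smul, dotProduct_smul, smul_eq_mul]
  rw [h3] at hsat
  nlinarith
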